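/- arXiv:1902.10790 — 4 statements merged into one kernel-verified Lean document; each statement's English description precedes it below -/
import Mathlib

section
/- The row geometric mean weighting method satisfies monotonicity: if A' is obtained from an n×n pairwise comparison matrix A by increasing the entry a_{ij} (i ≠ j) to a'_{ij} > a_{ij} and setting a'_{ji} = 1/a'_{ij}, leaving all other entries unchanged, then for the row geometric mean weights w_i(B) = (Π_k b_{ik})^{1/n}, we have w_i(A')/w_k(A') ≥ w_i(A)/w_k(A) for all k. -/
theorem rgm_monotonic {n : ℕ} (A A' : Matrix (Fin n) (Fin n) ℝ)
    (hpos : ∀ i j, 0 < A i j) (hrec : ∀ i j, A j i = 1 / A i j)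
    (i j : Fin n) (hij : i ≠ j)
    (hinc : A i j < A' i j) (hrec' : A' j i = 1 / A' i j)
    (hother : ∀ p q : Fin n, ¬(p = i ∧ q = j) → ¬(p = j ∧ q = i) → A' p q = A p q) :
    ∀ k : Fin n,
      (∏ l, A i l) ^ ((1 : ℝ) / n) / (∏ l, A k l) ^ ((1 : ℝ) / n) ≤
        (∏ l, A' i l) ^ ((1 : ℝ) / n) / (∏ l, A' k l) ^ ((1 : ℝ) / n) := by
  intro k
  have hn : (0:ℝ) ≤ 1 / n := by positivity
  have hAij' : 0 < A' i j := (hpos i j).trans hinc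
  have hpos' : ∀ p q, 0 < A' p q := by
    intro p q
    by_cases h1 : p = i ∧ q = j
    · obtain ⟨rfl, rfl⟩ := h1; exact hAij'
    · by_cases h2 : p = j ∧ q = i
      · obtain ⟨rfl, rfl⟩ := h2; rw [hrec']; positivity
      · rw [hother p q h1 h2]; exact hpos p q
  have hProdPos : ∀ p, 0 < ∏ l, A p l := fun p => Finset.prod_pos (fun l _ => hpos p l)
  have hProdPos' : ∀ p, 0 < ∏ l, A' p l := fun p => Finset.prod_pos (fun l _ => hpos' p l)
  have hrowi : ∏ l, A i l ≤ ∏ l, A' i l := by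
    apply Finset.prod_le_prod (fun l _ => (hpos i l).le)
    intro l _
    by_cases h : l = j
    · subst h; exact hinc.le
    · rw [hother i l (fun hc => h hc.2) (fun hc => hij hc.1)]
  have hnum : (∏ l, A i l) ^ ((1:ℝ)/n) ≤ (∏ l, A' i l) ^ ((1:ℝ)/n) :=
    Real.rpow_le_rpow (hProdPos i).le hrowi hn
  by_cases hk : k = i
  · subst hk
    rw [div_self (ne_of_gt (Real.rpow_pos_of_pos (hProdPos k) _)),
      div_self (ne_of_gt (Real.rpow_pos_of_pos (hProdPos' k) _))]
  · have hrowk : ∏ l, A' k l ≤ ∏ l, A k l := by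
      by_cases hkj : k = j
      · apply Finset.prod_le_prod (fun l _ => (hpos' k l).le)
        intro l _
        by_cases h : l = i
        · rw [hkj, h, hrec', hrec i j]
          exact one_div_le_one_div_of_le (hpos i j) hinc.le
        · rw [hother k l (fun hc => hk hc.1) (fun hc => h hc.2)]
      · apply le_of_eq
        apply Finset.prod_congr rfl
        intro l _
        exact hother k l (fun hc => hk hc.1) (fun hc => hkj hc.1)
    exact div_le_div₀ (Real.rpow_pos_of_pos (hProdPos' i) _).le hnum
      (Real.rpow_pos_of_pos (hProdPos' k) _)
      (Real.rpow_le_rpow (hProdPos' k).le hrowk hn)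
end

section
/- Every 3×3 pairwise comparison matrix A with entries a_{12} = a, a_{13} = b, a_{23} = c has Perron eigenvector proportional to the row geometric mean vector ((ab)^{1/3}, (c/a)^{1/3}, (1/(bc))^{1/3}); i.e., for n = 3 the eigenvector method and the row geometric mean method coincide. -/
/-!
Write `a = p³`, `b = q³`, `c = r³`, so that the row geometric mean vector is
`w = (pq, r/p, 1/(qr))`. In every row `i` the three ratios `a_{ij} w_j / w_i` are `1`, `δ` and
`δ⁻¹` in some order, where `δ = pr/q = (ac/b)^{1/3}`; hence `A w = (1 + δ + δ⁻¹) w`.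
-/

open Matrix

theorem Matrix.mulVec_reciprocal_cubes_rowGeomMean {K : Type*} [Field K] {p q r : K}
    (hp : p ≠ 0) (hq : q ≠ 0) (hr : r ≠ 0) :
    !![1, p ^ 3, q ^ 3; 1 / p ^ 3, 1, r ^ 3; 1 / q ^ 3, 1 / r ^ 3, 1] *ᵥ ![p * q, r / p, 1 / (q * r)] =
      (1 + p * r / q + q / (p * r)) • ![p * q, r / p, 1 / (q * r)] := by
  ext i
  fin_cases i <;> simp [mulVec, dotProduct, Fin.sum_univ_three] <;> field_simp <;> ring

theorem Real.pow_three_rpow_one_div_three {x : ℝ} (hx : 0 ≤ x) : (x ^ 3) ^ ((1 : ℝ) / 3) = x := by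
  simpa [one_div] using Real.pow_rpow_inv_natCast hx (n := 3) (by norm_num)

theorem em_eq_rgm_three (a b c : ℝ) (ha : 0 < a) (hb : 0 < b) (hc : 0 < c) :
    ∃ mu : ℝ, 0 < mu ∧
      (!![1, a, b; 1/a, 1, c; 1/b, 1/c, 1] : Matrix (Fin 3) (Fin 3) ℝ).mulVec
          ![(a * b) ^ ((1 : ℝ)/3), (c / a) ^ ((1 : ℝ)/3), (1 / (b * c)) ^ ((1 : ℝ)/3)] =
        mu • ![(a * b) ^ ((1 : ℝ)/3), (c / a) ^ ((1 : ℝ)/3), (1 / (b * c)) ^ ((1 : ℝ)/3)] := by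
  have cube_root {x : ℝ} (hx : 0 < x) : ∃ y : ℝ, 0 < y ∧ y ^ 3 = x :=
    ⟨x ^ ((3 : ℕ) : ℝ)⁻¹, by positivity, Real.rpow_inv_natCast_pow hx.le (by norm_num)⟩
  obtain ⟨p, hp, rfl⟩ := cube_root ha
  obtain ⟨q, hq, rfl⟩ := cube_root hb
  obtain ⟨r, hr, rfl⟩ := cube_root hc
  rw [← mul_pow, ← div_pow, one_div (q ^ 3 * r ^ 3), ← mul_pow, ← inv_pow,
    Real.pow_three_rpow_one_div_three (by positivity),
    Real.pow_three_rpow_one_div_three (by positivity),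
    Real.pow_three_rpow_one_div_three (by positivity), ← one_div]
  exact ⟨_, by positivity, mulVec_reciprocal_cubes_rowGeomMean hp.ne' hq.ne' hr.ne'⟩
end

section
/- The eigenvector method violates monotonicity: for the 4×4 pairwise comparison matrix A^α with first row (1, 8, α, 5), second row (1/8, 1, 3, 7), third row (1/α, 1/3, 1, 9), fourth row (1/5, 1/7, 1/9, 1), the ratio of the first and fourth coordinates of the Perron eigenvector satisfies w_1(A^1)/w_4(A^1) > w_1(A^{1.01})/w_4(A^{1.01}); that is, increasing the entry a_{13} from 1 to 1.01 strictly decreases w_1/w_4. -/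
set_option maxHeartbeats 2000000

/-- Collatz–Wielandt upper bound: if a positive 4×4 matrix has a positive
eigenvector `w` with eigenvalue `lam`, then for any positive test vector `x`
with `A x ≤ r x` componentwise, we get `lam ≤ r`. -/
lemma cw_ub (A : Matrix (Fin 4) (Fin 4) ℝ) (hA : ∀ i j, 0 < A i j)
    (w : Fin 4 → ℝ) (hw : ∀ i, 0 < w i) (lam : ℝ)
    (heig : A.mulVec w = lam • w)
    (x : Fin 4 → ℝ) (hx : ∀ i, 0 < x i) (r : ℝ)
    (hr : ∀ i, A.mulVec x i ≤ r * x i) : lam ≤ r := by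
  obtain ⟨i0, -, hmin⟩ := Finset.exists_min_image Finset.univ
    (fun i => x i / w i) ⟨0, Finset.mem_univ 0⟩
  have hcomp : ∀ j, x i0 * w j ≤ x j * w i0 := by
    intro j
    have h := hmin j (Finset.mem_univ j)
    rw [div_le_div_iff₀ (hw i0) (hw j)] at h
    linarith
  have h1 : lam * w i0 = ∑ j, A i0 j * w j := by
    have h := congrFun heig i0
    simp only [Matrix.mulVec, dotProduct, Pi.smul_apply, smul_eq_mul] at h
    linarith
  have h2 : (∑ j, A i0 j * w j) * x i0 ≤ (∑ j, A i0 j * x j) * w i0 := by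
    rw [Finset.sum_mul, Finset.sum_mul]
    apply Finset.sum_le_sum
    intro j _
    have hc := hcomp j
    nlinarith [hA i0 j, (hw j).le]
  have h3 : (∑ j, A i0 j * x j) ≤ r * x i0 := by
    have h := hr i0
    simp only [Matrix.mulVec, dotProduct] at h
    linarith
  nlinarith [hw i0, hx i0, mul_pos (hw i0) (hx i0)]

/-- Collatz–Wielandt lower bound. -/
lemma cw_lb (A : Matrix (Fin 4) (Fin 4) ℝ) (hA : ∀ i j, 0 < A i j)
    (w : Fin 4 → ℝ) (hw : ∀ i, 0 < w i) (lam : ℝ)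
    (heig : A.mulVec w = lam • w)
    (x : Fin 4 → ℝ) (hx : ∀ i, 0 < x i) (r : ℝ)
    (hr : ∀ i, r * x i ≤ A.mulVec x i) : r ≤ lam := by
  obtain ⟨i0, -, hmax⟩ := Finset.exists_max_image Finset.univ
    (fun i => x i / w i) ⟨0, Finset.mem_univ 0⟩
  have hcomp : ∀ j, x j * w i0 ≤ x i0 * w j := by
    intro j
    have h := hmax j (Finset.mem_univ j)
    rw [div_le_div_iff₀ (hw j) (hw i0)] at h
    linarith
  have h1 : lam * w i0 = ∑ j, A i0 j * w j := by
    have h := congrFun heig i0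
    simp only [Matrix.mulVec, dotProduct, Pi.smul_apply, smul_eq_mul] at h
    linarith
  have h2 : (∑ j, A i0 j * x j) * w i0 ≤ (∑ j, A i0 j * w j) * x i0 := by
    rw [Finset.sum_mul, Finset.sum_mul]
    apply Finset.sum_le_sum
    intro j _
    have hc := hcomp j
    nlinarith [hA i0 j, (hw j).le]
  have h3 : r * x i0 ≤ (∑ j, A i0 j * x j) := by
    have h := hr i0
    simp only [Matrix.mulVec, dotProduct] at h
    linarith
  nlinarith [hw i0, hx i0, mul_pos (hw i0) (hx i0)]

theorem em_not_monotonic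
    (w w' : Fin 4 → ℝ) (lam lam' : ℝ)
    (hw : ∀ i, 0 < w i) (hw' : ∀ i, 0 < w' i)
    (heig : (!![1, 8, 1, 5; 1/8, 1, 3, 7; 1, 1/3, 1, 9; 1/5, 1/7, 1/9, 1] :
        Matrix (Fin 4) (Fin 4) ℝ).mulVec w = lam • w)
    (heig' : (!![1, 8, 1.01, 5; 1/8, 1, 3, 7; 1/1.01, 1/3, 1, 9; 1/5, 1/7, 1/9, 1] :
        Matrix (Fin 4) (Fin 4) ℝ).mulVec w' = lam' • w') :
    w' 0 / w' 3 < w 0 / w 3 := by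
  have hApos : ∀ i j, 0 < (!![1, 8, 1, 5; 1/8, 1, 3, 7; 1, 1/3, 1, 9; 1/5, 1/7, 1/9, 1] :
      Matrix (Fin 4) (Fin 4) ℝ) i j := by
    intro i j
    fin_cases i <;> fin_cases j <;> norm_num
  have hBpos : ∀ i j, 0 < (!![1, 8, 1.01, 5; 1/8, 1, 3, 7; 1/1.01, 1/3, 1, 9;
      1/5, 1/7, 1/9, 1] : Matrix (Fin 4) (Fin 4) ℝ) i j := by
    intro i j
    fin_cases i <;> fin_cases j <;> norm_num
  have hxpos : ∀ i, (0:ℝ) < ![2591478737617/5000000000000, 227573734763/1000000000000,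
      433569823581/2000000000000, 373456059231/10000000000000] i := by
    intro i; fin_cases i <;> norm_num
  have hypos : ∀ i, (0:ℝ) < ![5190451435949/10000000000000, 568634458369/2500000000000,
      2161014632887/10000000000000, 46749512211/1250000000000] i := by
    intro i; fin_cases i <;> norm_num
  -- Collatz–Wielandt bounds for lam
  have hlam_lo : (264559238633/50000000000 : ℝ) ≤ lam := by
    apply cw_lb _ hApos w hw lam heig _ hxpos
    intro i
    fin_cases i <;>
      simp [Matrix.mulVec, dotProduct, Fin.sum_univ_four] <;> norm_num
  have hlam_hi : lam ≤ (132279619317/25000000000 : ℝ) := by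
    apply cw_ub _ hApos w hw lam heig _ hxpos
    intro i
    fin_cases i <;>
      simp [Matrix.mulVec, dotProduct, Fin.sum_univ_four] <;> norm_num
  have hlam'_lo : (132162682331/25000000000 : ℝ) ≤ lam' := by
    apply cw_lb _ hBpos w' hw' lam' heig' _ hypos
    intro i
    fin_cases i <;>
      simp [Matrix.mulVec, dotProduct, Fin.sum_univ_four] <;> norm_num
  have hlam'_hi : lam' ≤ (264325364663/50000000000 : ℝ) := by
    apply cw_ub _ hBpos w' hw' lam' heig' _ hypos
    intro i
    fin_cases i <;>
      simp [Matrix.mulVec, dotProduct, Fin.sum_univ_four] <;> norm_num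
  -- scalar eigen-equations
  have e0 := congrFun heig 0
  have e1 := congrFun heig 1
  have e2 := congrFun heig 2
  have f0 := congrFun heig' 0
  have f1 := congrFun heig' 1
  have f2 := congrFun heig' 2
  simp only [Matrix.mulVec, dotProduct, Fin.sum_univ_four, Pi.smul_apply,
    smul_eq_mul] at e0 e1 e2 f0 f1 f2
  norm_num [Matrix.cons_val_zero, Matrix.cons_val_one, Matrix.head_cons,
    Matrix.cons_val_two, Matrix.tail_cons, Matrix.cons_val_three,
    Matrix.cons_val', Matrix.empty_val', Matrix.cons_val_fin_one,
    Matrix.head_fin_const, Matrix.of_apply] at e0 e1 e2 f0 f1 f2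
  -- Cramer elimination: D(lam) * w0 = Da(lam) * w3
  have key1 : (529/24 + 3*lam^2 - lam^3) * w 0 = (-460/3 - 55*lam - 5*lam^2) * w 3 := by
    linear_combination ((1-lam)^2 - 1) * e0 + (-(8*(1-lam) - 1/3)) * e1 + (24 - (1-lam)) * e2
  have key2 : (5285401/242400 + 3*lam'^2 - lam'^3) * w' 0
      = (-2299/15 - 5509/100*lam' - 5*lam'^2) * w' 3 := by
    linear_combination ((1-lam')^2 - 1) * f0 + (-(8*(1-lam') - (101/100)/3)) * f1
      + (24 - (101/100)*(1-lam')) * f2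
  -- sign of the determinants
  have hD1 : (529/24 + 3*lam^2 - lam^3 : ℝ) < 0 := by nlinarith [hlam_lo]
  have hD2 : (5285401/242400 + 3*lam'^2 - lam'^3 : ℝ) < 0 := by nlinarith [hlam'_lo]
  -- monomial bounds
  have hsq1 : lam^2 ≤ (132279619317/25000000000 : ℝ)^2 := by nlinarith [hlam_lo]
  have hsq1' : ((264559238633/50000000000 : ℝ))^2 ≤ lam^2 := by nlinarith [hlam_lo]
  have hcu1 : lam^3 ≤ (132279619317/25000000000 : ℝ)^3 := by nlinarith [hlam_lo, hsq1]
  have hsq2 : lam'^2 ≤ (264325364663/50000000000 : ℝ)^2 := by nlinarith [hlam'_lo]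
  have hsq2' : ((132162682331/25000000000 : ℝ))^2 ≤ lam'^2 := by nlinarith [hlam'_lo]
  have hcu2 : ((132162682331/25000000000 : ℝ))^3 ≤ lam'^3 := by nlinarith [hlam'_lo, hsq2']
  -- g(lam) = Da - t * D  <  0  for matrix A  (t = 27756717/2000000)
  have hg1 : (-460/3 - 55*lam - 5*lam^2 : ℝ)
      < (27756717/2000000) * (529/24 + 3*lam^2 - lam^3) := by
    nlinarith [hcu1, hsq1', hlam_lo]
  -- g(lam') = Da' - t * D'  >  0  for matrix B
  have hg2 : (27756717/2000000) * (5285401/242400 + 3*lam'^2 - lam'^3)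
      < (-2299/15 - 5509/100*lam' - 5*lam'^2 : ℝ) := by
    nlinarith [hcu2, hsq2, hlam'_hi]
  -- conclude the component ratios
  have hr1 : (27756717/2000000 : ℝ) < w 0 / w 3 := by
    rw [lt_div_iff₀ (hw 3)]
    nlinarith [key1, hw 3, mul_pos (hw 3) (neg_pos.mpr hD1),
      mul_lt_mul_of_pos_right hg1 (hw 3)]
  have hr2 : w' 0 / w' 3 < (27756717/2000000 : ℝ) := by
    rw [div_lt_iff₀ (hw' 3)]
    nlinarith [key2, hw' 3, mul_pos (hw' 3) (neg_pos.mpr hD2),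
      mul_lt_mul_of_pos_right hg2 (hw' 3)]
  linarith
end

section
/- If the entry a_{ij} of a pairwise comparison matrix A is continuously increased (with a_{ji} = 1/a_{ij} decreased reciprocally and all other entries fixed), then the Perron eigenvalue λ_max, as a function of a_{ij} ∈ (0, ∞), tends to infinity as a_{ij} → ∞ (for n ≥ 3 when the rest of the matrix is fixed). -/
theorem pcm_eigen_tendsto_atTop {n : ℕ} (hn : 3 ≤ n)
    (B : Matrix (Fin n) (Fin n) ℝ)
    (hpos : ∀ i j, 0 < B i j) (hrec : ∀ i j, B j i = 1 / B i j)
    (i j : Fin n) (hij : i ≠ j)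
    (A : ℝ → Matrix (Fin n) (Fin n) ℝ)
    (hA : ∀ t > (0 : ℝ), A t i j = t ∧ A t j i = 1 / t ∧
      ∀ p q : Fin n, ¬(p = i ∧ q = j) → ¬(p = j ∧ q = i) → A t p q = B p q)
    (lam : ℝ → ℝ)
    (hlam : ∀ t > (0 : ℝ), ∃ w : Fin n → ℝ, (∀ k, 0 < w k) ∧
      (A t).mulVec w = lam t • w) :
    Filter.Tendsto lam Filter.atTop Filter.atTop := by
  -- find a third index k
  have hk : ∃ k : Fin n, k ≠ i ∧ k ≠ j := by
    by_contra h
    push_neg at h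
    have hsub : (Finset.univ : Finset (Fin n)) ⊆ {i, j} := by
      intro k _
      rcases Classical.em (k = i) with h1 | h1
      · simp [h1]
      · simp [h k h1]
    have hcard := Finset.card_le_card hsub
    have h1 : ({i, j} : Finset (Fin n)).card ≤ 2 := Finset.card_insert_le _ _ |>.trans (by simp)
    simp [Finset.card_univ] at hcard
    omega
  obtain ⟨k, hki, hkj⟩ := hk
  set c := B j k * B k i with hc_def
  have hc : 0 < c := mul_pos (hpos j k) (hpos k i)
  -- entries of A t are positive
  have hApos : ∀ t > (0 : ℝ), ∀ p q, 0 < A t p q := by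
    intro t ht p q
    obtain ⟨h1, h2, h3⟩ := hA t ht
    by_cases hpq : p = i ∧ q = j
    · rw [hpq.1, hpq.2, h1]; exact ht
    · by_cases hqp : p = j ∧ q = i
      · rw [hqp.1, hqp.2, h2]; positivity
      · rw [h3 p q hpq hqp]; exact hpos p q
  -- key bound: c * t ≤ (lam t)^3 and 0 < lam t, for t > 0
  have key : ∀ t > (0 : ℝ), 0 < lam t ∧ c * t ≤ (lam t) ^ 3 := by
    intro t ht
    obtain ⟨h1, h2, h3⟩ := hA t ht
    obtain ⟨w, hw, heig⟩ := hlam t ht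
    have hrow : ∀ p q : Fin n, A t p q * w q ≤ lam t * w p := by
      intro p q
      have hsum : ∑ r, A t p r * w r = lam t * w p := by
        have := congrFun heig p
        simpa [Matrix.mulVec, dotProduct] using this
      rw [← hsum]
      exact Finset.single_le_sum (fun r _ => le_of_lt (mul_pos (hApos t ht p r) (hw r)))
        (Finset.mem_univ q)
    have e1 : t * w j ≤ lam t * w i := by
      have := hrow i j; rwa [h1] at this
    have e2 : B j k * w k ≤ lam t * w j := by
      have := hrow j k
      rwa [h3 j k (fun h => hij h.1.symm) (fun h => hki h.2)] at this
    have e3 : B k i * w i ≤ lam t * w k := by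
      have := hrow k i
      rwa [h3 k i (fun h => hki h.1) (fun h => hkj h.1)] at this
    have hlampos : 0 < lam t := by
      nlinarith [e1, hw i, hw j, mul_pos ht (hw j)]
    refine ⟨hlampos, ?_⟩
    have e12 : (t * w j) * (B j k * w k) ≤ (lam t * w i) * (lam t * w j) :=
      mul_le_mul e1 e2 (le_of_lt (mul_pos (hpos j k) (hw k)))
        (mul_nonneg hlampos.le (hw i).le)
    have e123 : ((t * w j) * (B j k * w k)) * (B k i * w i) ≤
        ((lam t * w i) * (lam t * w j)) * (lam t * w k) :=
      mul_le_mul e12 e3 (le_of_lt (mul_pos (hpos k i) (hw i))) (mul_nonneg (mul_nonneg hlampos.le (hw i).le) (mul_nonneg hlampos.le (hw j).le))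
    have hwpos : 0 < w i * w j * w k := mul_pos (mul_pos (hw i) (hw j)) (hw k)
    have hmul : c * t * (w i * w j * w k) ≤ lam t ^ 3 * (w i * w j * w k) := by
      calc c * t * (w i * w j * w k)
          = t * w j * (B j k * w k) * (B k i * w i) := by rw [hc_def]; ring
        _ ≤ lam t * w i * (lam t * w j) * (lam t * w k) := e123
        _ = lam t ^ 3 * (w i * w j * w k) := by ring
    exact le_of_mul_le_mul_right hmul hwpos
  rw [Filter.tendsto_atTop]
  intro b
  rw [Filter.eventually_atTop]
  refine ⟨max 1 (b ^ 3 / c), fun t ht => ?_⟩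
  have ht1 : (1 : ℝ) ≤ t := le_trans (le_max_left _ _) ht
  have ht0 : (0 : ℝ) < t := lt_of_lt_of_le one_pos ht1
  obtain ⟨hl0, hl3⟩ := key t ht0
  have hb3 : b ^ 3 ≤ (lam t) ^ 3 := by
    have : b ^ 3 / c ≤ t := le_trans (le_max_right _ _) ht
    calc b ^ 3 = c * (b ^ 3 / c) := by field_simp
    _ ≤ c * t := by nlinarith
    _ ≤ (lam t) ^ 3 := hl3
  rcases le_or_gt b 0 with hb | hb
  · linarith
  · exact le_of_pow_le_pow_left₀ (by norm_num) (le_of_lt hl0) hb3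
end
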